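/- The map Φ : (0,∞) × ℝ × ℂ → ℂ², Φ(ρ, φ, ζ) = ((1 − q)/(1 + q), √2 ζ/(1 + q)) with q = ρ + |ζ|²/2 − iφ, is a bijection onto the open unit ball {(z₁,z₂) ∈ ℂ² : |z₁|² + |z₂|² < 1}, with inverse given by ρ = (1 − |z₁|² − |z₂|²)/|1 + z₁|², φ = −Im((1 − z₁)/(1 + z₁)), ζ = √2 z₂/(1 + z₁). -/

import Mathlib

open Complex

/-- The coordinate change from the universal hypermultiplet coordinates to ball coordinates. -/
noncomputable def Phi (p : ℝ × ℝ × ℂ) : ℂ × ℂ :=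
  let q : ℂ := (p.1 : ℂ) + (‖p.2.2‖^2 / 2 : ℝ) - Complex.I * (p.2.1 : ℂ)
  ((1 - q) / (1 + q), (Real.sqrt 2 : ℂ) * p.2.2 / (1 + q))

/-- The inverse coordinate change. -/
noncomputable def PhiInv (z : ℂ × ℂ) : ℝ × ℝ × ℂ :=
  ((1 - ‖z.1‖^2 - ‖z.2‖^2) / ‖1 + z.1‖^2,
   -(((1 - z.1) / (1 + z.1)).im),
   (Real.sqrt 2 : ℂ) * z.2 / (1 + z.1))

/-
The first coordinate of `Phi` is the Cayley transform `c(w) = (1 - w) / (1 + w)` of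
`q = ρ + |ζ|²/2 - iφ`, and `c` is an involution of `ℂ ∖ {-1}`. Together with
`Re c(z) = (1 - |z|²) / |1 + z|²`, this shows that `q` is recovered from `Phi p` as `c(z₁)`,
whose real part `ρ + |ζ|²/2` and imaginary part `-φ` give back `ρ` and `φ` once `ζ` is known.
Positivity of `ρ` then corresponds to `|z₁|² + |z₂|² < 1`, since
`ρ = (1 - |z₁|² - |z₂|²) / |1 + z₁|²`.
-/

noncomputable section

def cayley (w : ℂ) : ℂ := (1 - w) / (1 + w)

lemma one_add_cayley {w : ℂ} (hw : 1 + w ≠ 0) : 1 + cayley w = 2 / (1 + w) := by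
  unfold cayley
  field_simp
  ring

lemma cayley_cayley {w : ℂ} (hw : 1 + w ≠ 0) : cayley (cayley w) = w := by
  rw [cayley, one_add_cayley hw]
  unfold cayley
  field_simp
  ring

/-- No hypothesis is needed: at `w = -1` both sides are `0` by the conventions for `/ 0`. -/
lemma re_cayley (w : ℂ) : (cayley w).re = (1 - ‖w‖ ^ 2) / ‖1 + w‖ ^ 2 := by
  simp only [cayley, div_re, ← add_div, ← normSq_eq_norm_sq, normSq_apply, sub_re, sub_im,
    add_re, add_im, one_re, one_im]
  ring

lemma one_add_ne_zero_of_norm_lt_one {w : ℂ} (hw : ‖w‖ < 1) : 1 + w ≠ 0 := by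
  intro h
  rw [eq_neg_of_add_eq_zero_right h, norm_neg, norm_one] at hw
  exact lt_irrefl _ hw

lemma one_add_ne_zero_of_re_nonneg {w : ℂ} (hw : 0 ≤ w.re) : 1 + w ≠ 0 := by
  intro h
  have := congrArg re h
  rw [add_re, one_re, zero_re] at this
  linarith

lemma norm_sq_ofReal_mul_div (a : ℝ) (w u : ℂ) :
    ‖(a : ℂ) * w / u‖ ^ 2 = a ^ 2 * ‖w‖ ^ 2 / ‖u‖ ^ 2 := by
  rw [norm_div, norm_mul, norm_real, Real.norm_eq_abs, div_pow, mul_pow, sq_abs]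

lemma sqrt_two_mul_sqrt_two_mul_div {a : ℂ} (ha : 1 + a ≠ 0) (w : ℂ) :
    (Real.sqrt 2 : ℂ) * ((Real.sqrt 2 : ℂ) * w / (1 + a)) / (1 + cayley a) = w := by
  have h2 : (Real.sqrt 2 : ℂ) * Real.sqrt 2 = 2 := by
    rw [← ofReal_mul, Real.mul_self_sqrt zero_le_two, ofReal_ofNat]
  rw [one_add_cayley ha]
  field_simp
  linear_combination w * h2

/-- The variable `q` of the paper. -/
def phiQ (p : ℝ × ℝ × ℂ) : ℂ :=
  (p.1 : ℂ) + (‖p.2.2‖ ^ 2 / 2 : ℝ) - Complex.I * (p.2.1 : ℂ)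

lemma Phi_eq (p : ℝ × ℝ × ℂ) :
    Phi p = (cayley (phiQ p), (Real.sqrt 2 : ℂ) * p.2.2 / (1 + phiQ p)) := rfl

@[simp]
lemma phiQ_re (p : ℝ × ℝ × ℂ) : (phiQ p).re = p.1 + ‖p.2.2‖ ^ 2 / 2 := by
  simp only [phiQ, sub_re, add_re, ofReal_re, mul_re, I_re, I_im, ofReal_im]
  ring

@[simp]
lemma phiQ_im (p : ℝ × ℝ × ℂ) : (phiQ p).im = -p.2.1 := by
  simp only [phiQ, sub_im, add_im, ofReal_im, mul_im, I_re, I_im, ofReal_re]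
  ring

lemma one_add_phiQ_ne_zero {p : ℝ × ℝ × ℂ} (hp : 0 ≤ p.1) : 1 + phiQ p ≠ 0 :=
  one_add_ne_zero_of_re_nonneg (by rw [phiQ_re]; positivity)

lemma eq_of_phiQ_eq {p p' : ℝ × ℝ × ℂ} (hq : phiQ p = phiQ p') (hζ : p.2.2 = p'.2.2) :
    p = p' := by
  obtain ⟨ρ, φ, ζ⟩ := p
  obtain ⟨ρ', φ', ζ'⟩ := p'
  obtain rfl : ζ = ζ' := hζ
  have hre := congrArg re hq
  have him := congrArg im hq
  simp only [phiQ_re, phiQ_im, add_left_inj, neg_inj] at hre him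
  rw [hre, him]

lemma phiQ_PhiInv (z : ℂ × ℂ) : phiQ (PhiInv z) = cayley z.1 := by
  apply Complex.ext
  · simp only [phiQ_re, PhiInv, re_cayley, norm_sq_ofReal_mul_div,
      Real.sq_sqrt zero_le_two]
    ring
  · simp [PhiInv, cayley]

lemma zero_lt_PhiInv_fst_iff {z : ℂ × ℂ} (hz : 1 + z.1 ≠ 0) :
    0 < (PhiInv z).1 ↔ ‖z.1‖ ^ 2 + ‖z.2‖ ^ 2 < 1 := by
  rw [PhiInv, div_pos_iff_of_pos_right (by positivity)]
  constructor <;> intro h <;> linarith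

lemma PhiInv_Phi {p : ℝ × ℝ × ℂ} (hp : 0 ≤ p.1) : PhiInv (Phi p) = p := by
  have hq := one_add_phiQ_ne_zero hp
  refine eq_of_phiQ_eq ?_ ?_
  · rw [phiQ_PhiInv, Phi_eq, cayley_cayley hq]
  · exact sqrt_two_mul_sqrt_two_mul_div hq p.2.2

lemma one_add_Phi_fst_ne_zero {p : ℝ × ℝ × ℂ} (hp : 0 ≤ p.1) : 1 + (Phi p).1 ≠ 0 := by
  have hq := one_add_phiQ_ne_zero hp
  rw [Phi_eq, one_add_cayley hq]
  exact div_ne_zero two_ne_zero hq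

lemma Phi_PhiInv {z : ℂ × ℂ} (hz : 1 + z.1 ≠ 0) : Phi (PhiInv z) = z := by
  rw [Phi_eq, phiQ_PhiInv, cayley_cayley hz]
  exact Prod.ext rfl (sqrt_two_mul_sqrt_two_mul_div hz z.2)

end

theorem Phi_bijection :
    Set.BijOn Phi {p : ℝ × ℝ × ℂ | 0 < p.1}
      {z : ℂ × ℂ | ‖z.1‖^2 + ‖z.2‖^2 < 1} ∧
    (∀ p ∈ {p : ℝ × ℝ × ℂ | 0 < p.1}, PhiInv (Phi p) = p) ∧
    (∀ z ∈ {z : ℂ × ℂ | ‖z.1‖^2 + ‖z.2‖^2 < 1}, Phi (PhiInv z) = z) := by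
  have ball_ne : ∀ z ∈ {z : ℂ × ℂ | ‖z.1‖^2 + ‖z.2‖^2 < 1}, 1 + z.1 ≠ 0 :=
    fun z hz => one_add_ne_zero_of_norm_lt_one <| (sq_lt_one_iff₀ (norm_nonneg _)).1
      (by linarith [sq_nonneg ‖z.2‖, show ‖z.1‖^2 + ‖z.2‖^2 < 1 from hz])
  have left : ∀ p ∈ {p : ℝ × ℝ × ℂ | 0 < p.1}, PhiInv (Phi p) = p :=
    fun p hp => PhiInv_Phi hp.le
  have right : ∀ z ∈ {z : ℂ × ℂ | ‖z.1‖^2 + ‖z.2‖^2 < 1}, Phi (PhiInv z) = z :=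
    fun z hz => Phi_PhiInv (ball_ne z hz)
  refine ⟨Set.InvOn.bijOn ⟨left, right⟩ (fun p hp => ?_) (fun z hz => ?_), left, right⟩
  · rw [Set.mem_ofPred_eq, ← zero_lt_PhiInv_fst_iff (one_add_Phi_fst_ne_zero hp.le), left p hp]
    exact hp
  · exact (zero_lt_PhiInv_fst_iff (ball_ne z hz)).2 hz
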